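/- Let M be a module over an integral domain R. The divisor topology D(M) is a T1-space if and only if M is a pseudo simple R-module. -/

import Mathlib

/-!
`U_a` is the smallest open set containing `[a]`, so in `D(M)` the point `[b]` specializes to
`[a]` exactly when `a ∈ Rb`. Hence `D(M)` is `T₁` iff `a ∈ Rb` forces `Ra = Rb` for all
`a, b ∈ M^#`, i.e. iff no nonzero cyclic submodule sits strictly inside a proper cyclic one,
which is pseudo simplicity.
-/

open Submodule

variable (R M : Type) [CommRing R] [IsDomain R] [AddCommGroup M] [Module R M]

/-- The set of nonzero nongenerators of `M`. -/
def Msharp : Set M := {m | m ≠ 0 ∧ Submodule.span R {m} ≠ ⊤}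

/-- Equivalence: `m ∼ n` iff `Rm = Rn`. -/
def divSetoid : Setoid (Msharp R M) :=
  ⟨fun a b => Submodule.span R {a.1} = Submodule.span R {b.1},
    ⟨fun _ => rfl, fun h => h.symm, fun h₁ h₂ => h₁.trans h₂⟩⟩

/-- `EC(M^#)`: the set of equivalence classes. -/
def EC := Quotient (divSetoid R M)

/-- The class `[n]` of `n ∈ M^#`. -/
def cls (n : Msharp R M) : EC R M := Quotient.mk (divSetoid R M) n

/-- `U_m = {[n] : n ∣ m}` where `n ∣ m` means `m ∈ Rn`. -/
def Uset (m : M) : Set (EC R M) :=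
  {c | ∃ n : Msharp R M, cls R M n = c ∧ m ∈ Submodule.span R {n.1}}

/-- The divisor topology `D(M)`. -/
def divTop : TopologicalSpace (EC R M) :=
  TopologicalSpace.generateFrom {s | ∃ m ∈ Msharp R M, s = Uset R M m}

/-- An `R`-module `M` is pseudo simple if `Rm` is a simple module for every
nonzero `m ∈ M` with `Rm ≠ M`. -/
def PseudoSimple (R M : Type) [CommRing R] [AddCommGroup M] [Module R M] : Prop :=
  ∀ m : M, m ≠ 0 → Submodule.span R {m} ≠ ⊤ →
    IsSimpleModule R (Submodule.span R {m})


section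

variable {R M : Type} [CommRing R] [AddCommGroup M] [Module R M]

attribute [local instance] divTop

theorem cls_eq_cls_iff (a b : Msharp R M) :
    cls R M a = cls R M b ↔ span R {a.1} = span R {b.1} :=
  Quotient.eq (r := divSetoid R M)

theorem cls_mem_Uset_iff (n : Msharp R M) (m : M) :
    cls R M n ∈ Uset R M m ↔ m ∈ span R {n.1} := by
  constructor
  · rintro ⟨k, hkn, hmk⟩
    rwa [← (cls_eq_cls_iff k n).1 hkn]
  · exact fun hmn => ⟨n, rfl, hmn⟩

theorem isOpen_Uset {m : M} (hm : m ∈ Msharp R M) : IsOpen (Uset R M m) :=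
  .basic _ ⟨m, hm, rfl⟩

theorem specializes_cls_iff (a b : Msharp R M) :
    cls R M b ⤳ cls R M a ↔ a.1 ∈ span R {b.1} := by
  constructor
  · intro hba
    have ha : cls R M a ∈ Uset R M a.1 := (cls_mem_Uset_iff a a.1).2 (mem_span_singleton_self _)
    exact (cls_mem_Uset_iff b a.1).1 (specializes_iff_forall_open.1 hba _ (isOpen_Uset a.2) ha)
  · intro hab
    rw [Specializes, divTop, TopologicalSpace.nhds_generateFrom,
      TopologicalSpace.nhds_generateFrom]
    refine le_iInf₂ fun s ⟨has, hs⟩ => iInf₂_le s ⟨?_, hs⟩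
    obtain ⟨m, -, rfl⟩ := hs
    rw [cls_mem_Uset_iff] at has ⊢
    exact (span_singleton_le_iff_mem _ _).2 hab has

theorem t1Space_divTop_iff :
    T1Space (EC R M) ↔
      ∀ a b : Msharp R M, a.1 ∈ span R {b.1} → span R {a.1} = span R {b.1} := by
  rw [t1Space_iff_specializes_imp_eq]
  constructor
  · exact fun h a b hab => (cls_eq_cls_iff a b).1 (h ((specializes_cls_iff a b).2 hab)).symm
  · intro h x y
    refine Quotient.inductionOn₂ x y fun b a hba => ?_
    exact ((cls_eq_cls_iff a b).2 (h a b ((specializes_cls_iff a b).1 hba))).symm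

theorem pseudoSimple_iff :
    PseudoSimple R M ↔
      ∀ a b : Msharp R M, a.1 ∈ span R {b.1} → span R {a.1} = span R {b.1} := by
  constructor
  · intro hps a b hab
    have hb : IsAtom (span R {b.1}) := isSimpleModule_iff_isAtom.1 (hps b.1 b.2.1 b.2.2)
    refine (hb.le_iff.1 ((span_singleton_le_iff_mem _ _).2 hab)).resolve_left ?_
    simpa [span_singleton_eq_bot] using a.2.1
  · intro h m hm0 hmT
    have hm : span R {m} ≠ ⊥ := by simpa [span_singleton_eq_bot] using hm0
    refine isSimpleModule_iff_isAtom.2 ⟨hm, fun N hN => ?_⟩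
    by_contra hN0
    obtain ⟨x, hxN, hx0⟩ := (Submodule.ne_bot_iff N).1 hN0
    have hxm : span R {x} < span R {m} := ((span_singleton_le_iff_mem _ _).2 hxN).trans_lt hN
    have hxT : span R {x} ≠ ⊤ := fun hx => hmT (top_le_iff.1 (hx ▸ hxm.le))
    exact hxm.ne (h ⟨x, hx0, hxT⟩ ⟨m, hm0, hmT⟩ (hxm.le (mem_span_singleton_self x)))

end

theorem t1_iff_pseudoSimple :
    (@T1Space (EC R M) (divTop R M)) ↔ PseudoSimple R M :=
  t1Space_divTop_iff.trans pseudoSimple_iff.symm
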